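/- arXiv:2405.16338 — 3 statements merged into one kernel-verified Lean document; each statement's English description precedes it below -/
import Mathlib

section
/- Let A ⊆ 𝔹^n be the submodule generated by a collection of vectors each with support of size exactly two, and let ∼ be the equivalence relation on {1,…,n} generated by i ∼ j whenever e_i + e_j ∈ A. Then the smallest submodule of 𝔹^n containing A and closed under minimal elimination equals the submodule generated by {e_i + e_j : i ∼ j, i ≠ j}; moreover this submodule is the tropical linear space of the direct sum, over equivalence classes E of ∼, of the uniform matroids U_{|E|−1, |E|}. -/
/-! STATEMENT 4: Let `A ⊆ 𝔹^n` be the submodule generated by vectors of support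
size two, and `∼` the equivalence relation generated by `i ∼ j` iff
`e_i + e_j ∈ A`.  Then the smallest submodule of `𝔹^n` containing `A` and
closed under minimal elimination is the submodule generated by
`{e_i + e_j : i ∼ j, i ≠ j}`; moreover this submodule is the tropical linear
space of the direct sum, over the equivalence classes `E` of `∼`, of the
uniform matroids `U_{|E|-1,|E|}`, i.e. it consists of the vectors whose support
meets each equivalence class in a set of size `0` or `≥ 2` (and is contained in
the union of the classes). -/

/-- A submodule of `𝔹^n`: contains `0` and is closed under pointwise `or`. -/
def IsSubmodB {n : ℕ} (M : Set (Fin n → Bool)) : Prop :=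
  (fun _ => false) ∈ M ∧ ∀ v ∈ M, ∀ w ∈ M, (fun i => v i || w i) ∈ M

/-- The submodule of `𝔹^n` generated by a set of vectors. -/
def spanB {n : ℕ} (G : Set (Fin n → Bool)) : Set (Fin n → Bool) :=
  ⋂₀ {M | IsSubmodB M ∧ G ⊆ M}

/-- The vector `e_i + e_j`. -/
def pairVec {n : ℕ} (i j : Fin n) : Fin n → Bool :=
  fun k => decide (k = i) || decide (k = j)

/-- `u` is a `j`-elimination of the pair `(v, w)`. -/
def IsJElimB {n : ℕ} (v w : Fin n → Bool) (j : Fin n) (u : Fin n → Bool) : Prop :=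
  v j = true ∧ w j = true ∧ u j = false ∧ (∀ i, u i ≤ (v i || w i)) ∧
    ∀ i, i ≠ j → v i ≠ w i → u i = (v i || w i)

/-- The minimal `j`-elimination of `(v, w)`: `v + w` with coordinate `j` zeroed. -/
def minElimB {n : ℕ} (v w : Fin n → Bool) (j : Fin n) : Fin n → Bool :=
  Function.update (fun i => v i || w i) j false

/-- `M` is closed under minimal elimination: whenever `v, w ∈ M` agree and are
nonzero at `j` and `M` contains no `j`-elimination of the pair, `M` contains
the minimal `j`-elimination. -/
def ClosedMinElimB {n : ℕ} (M : Set (Fin n → Bool)) : Prop :=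
  ∀ v ∈ M, ∀ w ∈ M, ∀ j : Fin n, v j = true → w j = true →
    (¬ ∃ u ∈ M, IsJElimB v w j u) → minElimB v w j ∈ M

namespace MEAux
variable {n : ℕ}

lemma mem_spanB_iff {G : Set (Fin n → Bool)} {v : Fin n → Bool} :
    v ∈ spanB G ↔ ∀ M : Set (Fin n → Bool), IsSubmodB M → G ⊆ M → v ∈ M := by
  simp [spanB, Set.mem_sInter, and_imp]

lemma isSubmodB_spanB (G : Set (Fin n → Bool)) : IsSubmodB (spanB G) := by
  constructor
  · exact mem_spanB_iff.2 fun M hM _ => hM.1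
  · intro v hv w hw
    exact mem_spanB_iff.2 fun M hM hG =>
      hM.2 v (mem_spanB_iff.1 hv M hM hG) w (mem_spanB_iff.1 hw M hM hG)

lemma subset_spanB (G : Set (Fin n → Bool)) : G ⊆ spanB G :=
  fun _ hg => mem_spanB_iff.2 fun _ _ hG => hG hg

lemma spanB_le {G M : Set (Fin n → Bool)} (hM : IsSubmodB M) (hG : G ⊆ M) :
    spanB G ⊆ M := fun _ hv => mem_spanB_iff.1 hv M hM hG

/-- covering criterion implies membership in any submodule containing `G` -/
lemma covers_mem {G M : Set (Fin n → Bool)} (hM : IsSubmodB M) (hG : G ⊆ M)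
    {v : Fin n → Bool}
    (hv : ∀ i, v i = true → ∃ g ∈ G, (∀ k, g k = true → v k = true) ∧ g i = true) :
    v ∈ M := by
  have key : ∀ s : Finset (Fin n), ∃ u, u ∈ M ∧ (∀ k, u k = true → v k = true) ∧
      ∀ i ∈ s, v i = true → u i = true := by
    intro s
    induction s using Finset.induction_on with
    | empty => exact ⟨fun _ => false, hM.1, by simp, by simp⟩
    | @insert a s _ ih =>
      obtain ⟨u, huM, hule, hcov⟩ := ih
      by_cases hva : v a = true
      · obtain ⟨g, hgG, hgle, hga⟩ := hv a hva
        refine ⟨fun k => u k || g k, hM.2 u huM g (hG hgG), ?_, ?_⟩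
        · intro k hk
          rcases Bool.or_eq_true_iff.1 hk with h | h
          · exact hule k h
          · exact hgle k h
        · intro i hi hvi
          rcases Finset.mem_insert.1 hi with rfl | hi
          · simp [hga]
          · simp [hcov i hi hvi]
      · refine ⟨u, huM, hule, ?_⟩
        intro i hi hvi
        rcases Finset.mem_insert.1 hi with rfl | hi
        · exact absurd hvi hva
        · exact hcov i hi hvi
  obtain ⟨u, huM, hule, hcov⟩ := key Finset.univ
  have huv : u = v := by
    funext k
    cases hk : v k with
    | true => exact hcov k (Finset.mem_univ k) hk
    | false =>
      cases hu : u k with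
      | true => rw [hule k hu] at hk; exact absurd hk (by simp)
      | false => rfl
  rwa [huv] at huM

lemma pairVec_self_left (i j : Fin n) : pairVec i j i = true := by simp [pairVec]
lemma pairVec_self_right (i j : Fin n) : pairVec i j j = true := by simp [pairVec]
lemma pairVec_comm (i j : Fin n) : pairVec i j = pairVec j i := by
  funext k; simp [pairVec, Bool.or_comm]
lemma pairVec_eq_true_iff {i j k : Fin n} : pairVec i j k = true ↔ k = i ∨ k = j := by
  simp [pairVec]

lemma support_two {g : Fin n → Bool}
    (hg : (Finset.univ.filter fun i => g i = true).card = 2)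
    {i : Fin n} (hi : g i = true) : ∃ j, j ≠ i ∧ g = pairVec i j := by
  obtain ⟨a, b, hab, hset⟩ := Finset.card_eq_two.1 hg
  have hmem : ∀ k, g k = true ↔ (k = a ∨ k = b) := by
    intro k
    constructor
    · intro h
      have : k ∈ Finset.univ.filter fun i => g i = true := by simp [h]
      rw [hset] at this; simpa using this
    · intro h
      have : k ∈ ({a, b} : Finset (Fin n)) := by simpa using h
      rw [← hset] at this; simpa using this
  have geq : ∀ x y : Fin n, (∀ k, g k = true ↔ (k = x ∨ k = y)) → g = pairVec x y := by
    intro x y h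
    funext k
    show g k = (decide (k = x) || decide (k = y))
    cases hk : g k with
    | true => rcases (h k).1 hk with rfl | rfl <;> simp
    | false =>
      have hno : ¬(k = x ∨ k = y) := fun hc => by
        rw [← h k] at hc; rw [hk] at hc; exact absurd hc (by simp)
      push_neg at hno
      simp [hno.1, hno.2]
  rcases (hmem i).1 hi with rfl | rfl
  · exact ⟨b, fun h => hab h.symm, geq i b hmem⟩
  · refine ⟨a, fun h => hab h, ?_⟩
    rw [pairVec_comm]; exact geq a i hmem

lemma minElimB_apply (v w : Fin n → Bool) (j k : Fin n) :
    minElimB v w j k = if k = j then false else v k || w k := by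
  simp [minElimB, Function.update]

lemma isJElim_minElim {v w : Fin n → Bool} {j : Fin n} (hv : v j = true) (hw : w j = true) :
    IsJElimB v w j (minElimB v w j) :=
  ⟨hv, hw, by simp [minElimB_apply],
    fun i => by rw [minElimB_apply]; split <;> simp,
    fun i hij _ => by simp [minElimB_apply, hij]⟩

section Sim
variable (sim : Fin n → Fin n → Prop)

/-- the candidate set: every coordinate of the support has a partner -/
def Sset : Set (Fin n → Bool) :=
  {v | ∀ i : Fin n, v i = true → ∃ j : Fin n, j ≠ i ∧ sim i j ∧ v j = true}

lemma isSubmodB_Sset : IsSubmodB (Sset sim) := by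
  constructor
  · intro i hi; exact absurd hi (by simp)
  · intro v hv w hw i hi
    rcases Bool.or_eq_true_iff.1 hi with h | h
    · obtain ⟨j, hj, hs, hvj⟩ := hv i h
      exact ⟨j, hj, hs, by simp [hvj]⟩
    · obtain ⟨j, hj, hs, hwj⟩ := hw i h
      exact ⟨j, hj, hs, by simp [hwj]⟩

lemma closed_Sset (hsymm : ∀ a b, sim a b → sim b a)
    (htrans : ∀ a b c, sim a b → sim b c → sim a c) :
    ClosedMinElimB (Sset sim) := by
  intro v hv w hw j hvj hwj hno
  by_cases hmin : minElimB v w j ∈ Sset sim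
  · exact hmin
  · exfalso
    apply hno
    set u0 := minElimB v w j with hu0
    have hu0j : u0 j = false := by simp [hu0, minElimB_apply]
    have hu0ne : ∀ k, k ≠ j → u0 k = (v k || w k) := by
      intro k hk; simp [hu0, minElimB_apply, hk]
    simp only [Sset, Set.mem_setOf_eq, not_forall] at hmin
    obtain ⟨i, hi, hbad⟩ := hmin
    push_neg at hbad
    have hij : i ≠ j := fun h => by rw [h, hu0j] at hi; exact absurd hi (by simp)
    have hvwi : (v i || w i) = true := by rw [← hu0ne i hij]; exact hi
    have hnp : ∀ k, k ≠ i → sim i k → u0 k = false := by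
      intro k hk hs
      cases h : u0 k with
      | false => rfl
      | true => exact absurd h (hbad k hk hs)
    have hsimij : sim i j := by
      rcases Bool.or_eq_true_iff.1 hvwi with h | h
      · obtain ⟨k, hk, hs, hvk⟩ := hv i h
        by_cases hkj : k = j
        · rw [hkj] at hs; exact hs
        · have : u0 k = true := by rw [hu0ne k hkj]; simp [hvk]
          exact absurd this (by rw [hnp k hk hs]; simp)
      · obtain ⟨k, hk, hs, hwk⟩ := hw i h
        by_cases hkj : k = j
        · rw [hkj] at hs; exact hs
        · have : u0 k = true := by rw [hu0ne k hkj]; simp [hwk]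
          exact absurd this (by rw [hnp k hk hs]; simp)
    have hvi : v i = true := by
      cases h : v i with
      | true => rfl
      | false =>
        obtain ⟨m, hmj, hsjm, hvm⟩ := hv j hvj
        have hmi : m ≠ i := fun hc => by rw [hc, h] at hvm; exact absurd hvm (by simp)
        have : u0 m = true := by rw [hu0ne m hmj]; simp [hvm]
        exact absurd this (by rw [hnp m hmi (htrans _ _ _ hsimij hsjm)]; simp)
    have hwi : w i = true := by
      cases h : w i with
      | true => rfl
      | false =>
        obtain ⟨m, hmj, hsjm, hwm⟩ := hw j hwj
        have hmi : m ≠ i := fun hc => by rw [hc, h] at hwm; exact absurd hwm (by simp)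
        have : u0 m = true := by rw [hu0ne m hmj]; simp [hwm]
        exact absurd this (by rw [hnp m hmi (htrans _ _ _ hsimij hsjm)]; simp)
    refine ⟨Function.update u0 i false, ?_, ?_⟩
    · intro k hk
      have hki : k ≠ i := by
        intro hc; rw [hc, Function.update_self] at hk; exact absurd hk (by simp)
      rw [Function.update_of_ne hki] at hk
      have hkj : k ≠ j := fun hc => by rw [hc, hu0j] at hk; exact absurd hk (by simp)
      have hvwk : (v k || w k) = true := by rw [← hu0ne k hkj]; exact hk
      have main : ∀ m, m ≠ k → sim k m → (v m || w m) = true →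
          ∃ m', m' ≠ k ∧ sim k m' ∧ Function.update u0 i false m' = true := by
        intro m hmk hskm hvwm
        have hmi : m ≠ i := by
          intro hc
          subst hc
          exact absurd hk (by rw [hnp k hki (hsymm _ _ hskm)]; simp)
        have hmj : m ≠ j := by
          intro hc
          subst hc
          exact absurd hk (by rw [hnp k hki (htrans _ _ _ hsimij (hsymm _ _ hskm))]; simp)
        refine ⟨m, hmk, hskm, ?_⟩
        rw [Function.update_of_ne hmi, hu0ne m hmj]; exact hvwm
      rcases Bool.or_eq_true_iff.1 hvwk with h | h
      · obtain ⟨m, hmk, hskm, hvm⟩ := hv k h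
        exact main m hmk hskm (by simp [hvm])
      · obtain ⟨m, hmk, hskm, hwm⟩ := hw k h
        exact main m hmk hskm (by simp [hwm])
    · refine ⟨hvj, hwj, ?_, ?_, ?_⟩
      · rw [Function.update_of_ne (Ne.symm hij)]; exact hu0j
      · intro k
        by_cases hki : k = i
        · subst hki; rw [Function.update_self]; exact Bool.false_le _
        · rw [Function.update_of_ne hki]
          by_cases hkj : k = j
          · subst hkj; rw [hu0j]; exact Bool.false_le _
          · rw [hu0ne k hkj]
      · intro k hkj hne
        by_cases hki : k = i
        · subst hki; rw [hvi, hwi] at hne; exact absurd rfl hne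
        · rw [Function.update_of_ne hki]; exact hu0ne k hkj

end Sim

lemma pair_mem {Gen M : Set (Fin n → Bool)} (hM : IsSubmodB M)
    (hA : spanB Gen ⊆ M) (hC : ClosedMinElimB M)
    {i j : Fin n} (hs : Relation.EqvGen (fun a b => pairVec a b ∈ spanB Gen) i j) :
    i ≠ j → pairVec i j ∈ M := by
  clear hM
  induction hs with
  | rel a b h => exact fun _ => hA h
  | refl a => exact fun h => absurd rfl h
  | symm a b h ih => exact fun hba => by rw [pairVec_comm]; exact ih (Ne.symm hba)
  | trans a b c hab hbc iha ihb =>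
    intro hac
    by_cases hab' : a = b
    · subst hab'; exact ihb hac
    by_cases hbc' : b = c
    · subst hbc'; exact iha hac
    have hv := iha hab'
    have hw := ihb hbc'
    have key : ∀ u, IsJElimB (pairVec a b) (pairVec b c) b u → u = pairVec a c := by
      rintro u ⟨-, -, hub, hule, hforce⟩
      funext l
      by_cases hla : l = a
      · subst hla
        have hne : pairVec l b l ≠ pairVec b c l := by simp [pairVec, hab', hac]
        rw [hforce l hab' hne]
        simp [pairVec, hab', hac]
      · by_cases hlc : l = c
        · subst hlc
          have hlb : l ≠ b := Ne.symm hbc'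
          have hne : pairVec a b l ≠ pairVec b l l := by
            simp [pairVec, Ne.symm hac, hlb]
          rw [hforce l hlb hne]
          simp [pairVec, Ne.symm hac, hlb]
        · by_cases hlb : l = b
          · subst hlb; rw [hub]; simp [pairVec, Ne.symm hab', hbc']
          · have hle : u l ≤ (pairVec a b l || pairVec b c l) := hule l
            rw [show (pairVec a b l || pairVec b c l) = false by
              simp [pairVec, hla, hlb, hlc]] at hle
            have hul : u l = false := by
              cases h : u l
              · rfl
              · rw [h] at hle; exact absurd hle (by decide)
            rw [hul]; simp [pairVec, hla, hlc]
    by_cases hex : ∃ u ∈ M, IsJElimB (pairVec a b) (pairVec b c) b u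
    · obtain ⟨u, huM, hu⟩ := hex
      rw [← key u hu]; exact huM
    · have hmem := hC _ hv _ hw b (pairVec_self_right a b) (pairVec_self_left b c) hex
      rwa [key _ (isJElim_minElim (pairVec_self_right a b) (pairVec_self_left b c))] at hmem

section Gen
variable (Gen : Set (Fin n → Bool))

lemma Gen_subset_spanP
    (hGen : ∀ g ∈ Gen, (Finset.univ.filter fun i => g i = true).card = 2) :
    Gen ⊆ spanB {g | ∃ i j : Fin n, i ≠ j ∧
      Relation.EqvGen (fun a b => pairVec a b ∈ spanB Gen) i j ∧ g = pairVec i j} := by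
  intro g hg
  have hcard := hGen g hg
  have hne : (Finset.univ.filter fun i => g i = true).Nonempty := by
    rw [← Finset.card_pos, hcard]; norm_num
  obtain ⟨i, hi⟩ := hne
  have hi' : g i = true := by simpa using hi
  obtain ⟨j, hji, hgp⟩ := support_two hcard hi'
  apply subset_spanB
  refine ⟨i, j, Ne.symm hji, Relation.EqvGen.rel _ _ ?_, hgp⟩
  rw [← hgp]; exact subset_spanB Gen hg

lemma B_eq_S :
    spanB {g | ∃ i j : Fin n, i ≠ j ∧
      Relation.EqvGen (fun a b => pairVec a b ∈ spanB Gen) i j ∧ g = pairVec i j}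
    = Sset (Relation.EqvGen fun i j => pairVec i j ∈ spanB Gen) := by
  apply Set.Subset.antisymm
  · apply spanB_le (isSubmodB_Sset _)
    rintro g ⟨i, j, hij, hs, rfl⟩
    intro k hk
    rcases pairVec_eq_true_iff.1 hk with rfl | rfl
    · exact ⟨j, Ne.symm hij, hs, pairVec_self_right _ _⟩
    · exact ⟨i, hij, Relation.EqvGen.symm _ _ hs, pairVec_self_left _ _⟩
  · intro v hv
    apply covers_mem (isSubmodB_spanB _) (subset_spanB _)
    intro i hi
    obtain ⟨j, hji, hs, hvj⟩ := hv i hi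
    refine ⟨pairVec i j, ⟨i, j, Ne.symm hji, hs, rfl⟩, ?_, pairVec_self_left _ _⟩
    intro k hk
    rcases pairVec_eq_true_iff.1 hk with rfl | rfl
    · exact hi
    · exact hvj

end Gen
end MEAux

open MEAux in
theorem minimal_elimination_envelope_of_support_two
    {n : ℕ} (Gen : Set (Fin n → Bool))
    (hGen : ∀ g ∈ Gen, (Finset.univ.filter fun i => g i = true).card = 2) :
    -- `A` is the submodule generated by `Gen`, `∼` is `Relation.EqvGen r`
    -- where `r i j ↔ e_i + e_j ∈ A`, and `B` is the span of the pairs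
    -- within equivalence classes.
    (fun (A : Set (Fin n → Bool)) =>
      fun (sim : Fin n → Fin n → Prop) =>
        fun (B : Set (Fin n → Bool)) =>
          (IsSubmodB B ∧ A ⊆ B ∧ ClosedMinElimB B ∧
            (∀ M : Set (Fin n → Bool),
              IsSubmodB M → A ⊆ M → ClosedMinElimB M → B ⊆ M)) ∧
          B = {v | ∀ i : Fin n, v i = true →
                ∃ j : Fin n, j ≠ i ∧ sim i j ∧ v j = true})
      (spanB Gen)
      (Relation.EqvGen fun i j => pairVec i j ∈ spanB Gen)
      (spanB {g | ∃ i j : Fin n, i ≠ j ∧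
        Relation.EqvGen (fun a b => pairVec a b ∈ spanB Gen) i j ∧
        g = pairVec i j}) := by
  have hBS := B_eq_S Gen
  refine ⟨⟨isSubmodB_spanB _, ?_, ?_, ?_⟩, hBS⟩
  · exact spanB_le (isSubmodB_spanB _) (Gen_subset_spanP Gen hGen)
  · rw [hBS]
    exact closed_Sset _ (fun _ _ h => Relation.EqvGen.symm _ _ h)
      (fun _ _ _ h1 h2 => Relation.EqvGen.trans _ _ _ h1 h2)
  · intro M hM hAM hCM
    apply spanB_le hM
    rintro g ⟨i, j, hij, hs, rfl⟩
    exact pair_mem hM hAM hCM hs hij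
end

section
/- Let M ⊆ S^n be any subset of the free module over a totally ordered idempotent semifield S. Define M^[0] as the submodule generated by M, and inductively M^[ℓ] as the submodule generated by M^[ℓ−1] together with all minimal j-eliminations (v+v′)_ĵ of pairs v, v′ ∈ M^[ℓ−1] with v_j = v′_j ≠ 0 for which M^[ℓ−1] contains no j-elimination. Then the union M^[∞] = ⋃_ℓ M^[ℓ] is a tropical linear space, i.e., for every pair v, v′ ∈ M^[∞] with v_j = v′_j ≠ 0 for some j, M^[∞] contains a j-elimination of the pair. -/
/-! STATEMENT 6: For any subset `M ⊆ S^n` over a totally ordered idempotent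
semifield `S` (modeled as a `LinearOrderedCommGroupWithZero` with `max` as
addition), the minimal-elimination envelope `M^[∞] = ⋃ ℓ, M^[ℓ]` — where
`M^[0]` is the submodule generated by `M` and `M^[ℓ]` is generated by
`M^[ℓ-1]` together with the minimal eliminations of pairs from `M^[ℓ-1]`
admitting no elimination in `M^[ℓ-1]` — is a tropical linear space: it is a
submodule containing a `j`-elimination of every pair `v, v' ∈ M^[∞]` with
`v_j = v'_j ≠ 0`. -/

noncomputable section

variable {S : Type*} [LinearOrderedCommGroupWithZero S] {n : ℕ}

/-- Submodule of `S^n`: contains `0`, closed under tropical addition (`max`)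
and scalar multiplication. -/
def IsSubmodS (M : Set (Fin n → S)) : Prop :=
  (fun _ => 0) ∈ M ∧ (∀ v ∈ M, ∀ w ∈ M, (fun i => max (v i) (w i)) ∈ M) ∧
    ∀ c : S, ∀ v ∈ M, (fun i => c * v i) ∈ M

/-- The submodule generated by a set. -/
def spanS (G : Set (Fin n → S)) : Set (Fin n → S) :=
  ⋂₀ {M | IsSubmodS M ∧ G ⊆ M}

/-- `u` is a `j`-elimination of the pair `(v, v')`. -/
def IsJElim (v v' : Fin n → S) (j : Fin n) (u : Fin n → S) : Prop :=
  v j = v' j ∧ v j ≠ 0 ∧ u j = 0 ∧ (∀ i, u i ≤ max (v i) (v' i)) ∧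
    ∀ i, v i ≠ v' i → u i = max (v i) (v' i)

/-- The minimal `j`-elimination `(v + v')_ĵ`. -/
def minElimS (v v' : Fin n → S) (j : Fin n) : Fin n → S :=
  Function.update (fun i => max (v i) (v' i)) j 0

/-- The chain `M^[0] ⊆ M^[1] ⊆ ⋯` of submodules. -/
def env (M : Set (Fin n → S)) : ℕ → Set (Fin n → S)
  | 0 => spanS M
  | ℓ + 1 => spanS (env M ℓ ∪
      {u | ∃ v ∈ env M ℓ, ∃ v' ∈ env M ℓ, ∃ j : Fin n,
        v j = v' j ∧ v j ≠ 0 ∧ (¬ ∃ z ∈ env M ℓ, IsJElim v v' j z) ∧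
        u = minElimS v v' j})


lemma isSubmodS_spanS (G : Set (Fin n → S)) : IsSubmodS (spanS G) := by
  refine ⟨?_, ?_, ?_⟩
  · intro A hA; exact hA.1.1
  · intro v hv w hw A hA; exact hA.1.2.1 v (hv A hA) w (hw A hA)
  · intro c v hv A hA; exact hA.1.2.2 c v (hv A hA)

lemma subset_spanS (G : Set (Fin n → S)) : G ⊆ spanS G := by
  intro x hx A hA; exact hA.2 hx

lemma isSubmodS_env (M : Set (Fin n → S)) (ℓ : ℕ) : IsSubmodS (env M ℓ) := by
  cases ℓ with
  | zero => exact isSubmodS_spanS M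
  | succ k => exact isSubmodS_spanS _

lemma env_mono (M : Set (Fin n → S)) : ∀ {a b : ℕ}, a ≤ b → env M a ⊆ env M b := by
  intro a b h
  induction h with
  | refl => exact subset_rfl
  | step _ ih => exact ih.trans ((Set.subset_union_left).trans (subset_spanS _))

theorem minimal_elimination_envelope_is_tropical_linear_space
    (M : Set (Fin n → S)) :
    IsSubmodS (⋃ ℓ, env M ℓ) ∧
      ∀ v ∈ ⋃ ℓ, env M ℓ, ∀ v' ∈ ⋃ ℓ, env M ℓ, ∀ j : Fin n,
        v j = v' j → v j ≠ 0 →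
          ∃ u ∈ ⋃ ℓ, env M ℓ, IsJElim v v' j u := by
  constructor
  · refine ⟨?_, ?_, ?_⟩
    · exact Set.mem_iUnion.2 ⟨0, (isSubmodS_env M 0).1⟩
    · intro v hv w hw
      obtain ⟨a, ha⟩ := Set.mem_iUnion.1 hv
      obtain ⟨b, hb⟩ := Set.mem_iUnion.1 hw
      exact Set.mem_iUnion.2 ⟨max a b, (isSubmodS_env M (max a b)).2.1 v
        (env_mono M (le_max_left a b) ha) w (env_mono M (le_max_right a b) hb)⟩
    · intro c v hv
      obtain ⟨a, ha⟩ := Set.mem_iUnion.1 hv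
      exact Set.mem_iUnion.2 ⟨a, (isSubmodS_env M a).2.2 c v ha⟩
  · intro v hv v' hv' j hj hj0
    obtain ⟨a, ha⟩ := Set.mem_iUnion.1 hv
    obtain ⟨b, hb⟩ := Set.mem_iUnion.1 hv'
    set ℓ := max a b
    have hva : v ∈ env M ℓ := env_mono M (le_max_left a b) ha
    have hvb : v' ∈ env M ℓ := env_mono M (le_max_right a b) hb
    have hmin : IsJElim v v' j (minElimS v v' j) := by
      refine ⟨hj, hj0, Function.update_self j 0 _, ?_, ?_⟩
      · intro i
        by_cases h : i = j
        · subst h; simp [minElimS]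
        · simp [minElimS, Function.update_of_ne h]
      · intro i hne
        have h : i ≠ j := by rintro rfl; exact hne hj
        simp [minElimS, Function.update_of_ne h]
    by_cases hz : ∃ z ∈ env M ℓ, IsJElim v v' j z
    · obtain ⟨z, hzmem, hzel⟩ := hz
      exact ⟨z, Set.mem_iUnion.2 ⟨ℓ, hzmem⟩, hzel⟩
    · refine ⟨minElimS v v' j, Set.mem_iUnion.2 ⟨ℓ + 1, ?_⟩, hmin⟩
      exact subset_spanS _ (Set.mem_union_right _ ⟨v, hva, v', hvb, j, hj, hj0, hz, rfl⟩)


end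
end

section
/- Let G be the graph on the set Δ^n_e of degree-e monomials in x_0,…,x_n, with an edge {x^{α+γ}, x^{β+γ}} for each degree (e−d) monomial x^γ, where x^α and x^β are fixed distinct degree-d monomials. Then G is a forest (contains no cycles). -/
/-! Orient every edge `{γ + α, γ + β}` from `γ + α` to `γ + β`. Choosing `i` with `α i < β i`,
the exponent of `x_i` increases along every oriented edge, and a vertex `v` has at most one
in-neighbour, namely `v - β + α`. On a cycle, a vertex maximizing the exponent of `x_i` would
have both of its two distinct cycle-neighbours as in-neighbours. -/

namespace SimpleGraph

theorem isAcyclic_of_orientation {V α : Type*} [LinearOrder α] (G : SimpleGraph V)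
    (R : V → V → Prop) (φ : V → α) (h_adj : ∀ u v, G.Adj u v → R u v ∨ R v u)
    (h_mono : ∀ u v, R u v → φ u < φ v) (h_inj : ∀ u w v, R u v → R w v → u = w) :
    G.IsAcyclic := by
  classical
  intro v c hc
  obtain ⟨m, hm, hmax⟩ := c.support.toFinset.exists_max_image φ ⟨v, by simp⟩
  have into_max : ∀ w ∈ c.toSubgraph.neighborSet m, R w m := by
    intro w hw
    refine (h_adj m w (c.toSubgraph.adj_sub hw)).resolve_left fun h => ?_
    have hw_mem : w ∈ c.support := (c.mem_verts_toSubgraph).mp (c.toSubgraph.edge_vert hw.symm)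
    exact (h_mono m w h).not_ge (hmax w (List.mem_toFinset.mpr hw_mem))
  obtain ⟨x, y, hxy, hnbrs⟩ := Set.ncard_eq_two.mp
    (hc.ncard_neighborSet_toSubgraph_eq_two (List.mem_toFinset.mp hm))
  exact hxy (h_inj x y m (into_max x (by simp [hnbrs])) (into_max y (by simp [hnbrs])))

end SimpleGraph

theorem Fintype.exists_lt_of_sum_eq_of_ne {ι M : Type*} [Fintype ι]
    [AddCommMonoid M] [LinearOrder M] [IsOrderedCancelAddMonoid M] {f g : ι → M}
    (hsum : ∑ i, f i = ∑ i, g i) (hne : f ≠ g) : ∃ i, f i < g i := by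
  by_contra! hle
  exact hne (funext fun i =>
    ((Finset.sum_eq_sum_iff_of_le fun j _ => hle j).mp hsum.symm i (Finset.mem_univ i)).symm)

theorem macaulay_binomial_graph_is_acyclic
    {n d c : ℕ} (α β : Fin (n + 1) → ℕ)
    (hα : ∑ i, α i = d) (hβ : ∑ i, β i = d) (hne : α ≠ β)
    (G : SimpleGraph {a : Fin (n + 1) → ℕ // ∑ i, a i = d + c})
    (hG : ∀ u v, G.Adj u v ↔ u ≠ v ∧ ∃ γ : Fin (n + 1) → ℕ,
      (∑ i, γ i = c) ∧
      ((u.1 = γ + α ∧ v.1 = γ + β) ∨ (u.1 = γ + β ∧ v.1 = γ + α))) :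
    G.IsAcyclic := by
  obtain ⟨i, hi⟩ := Fintype.exists_lt_of_sum_eq_of_ne (hα.trans hβ.symm) hne
  refine G.isAcyclic_of_orientation (fun u v => ∃ γ, u.1 = γ + α ∧ v.1 = γ + β) (fun u => u.1 i)
    ?_ ?_ ?_
  · intro u v huv
    obtain ⟨-, γ, -, ⟨hu, hv⟩ | ⟨hu, hv⟩⟩ := (hG u v).mp huv
    exacts [.inl ⟨γ, hu, hv⟩, .inr ⟨γ, hv, hu⟩]
  · rintro u v ⟨γ, hu, hv⟩
    simpa [hu, hv] using hi
  · rintro u w v ⟨γ, hu, hv⟩ ⟨γ', hw, hv'⟩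
    have hγ : γ = γ' := add_right_cancel (hv.symm.trans hv')
    exact Subtype.ext (by rw [hu, hw, hγ])
end
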